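/- arXiv:2105.07594 — 6 statements merged into one kernel-verified Lean document; each statement's English description precedes it below -/
import Mathlib

section
/- In the subgraph H of And(k) induced by W_0 ∪ V_2, the vertex 3j ∈ W_0 has exactly j neighbors (all in V_2), for 1 ≤ j ≤ k−1. -/
/-- The connection set of the Andrásfai graph: residues ≡ 1 (mod 3) in Z_{3k-1}. -/
def andrasfaiSet (k : ℕ) : Set (ZMod (3 * k - 1)) :=
  {x | ∃ t < k, x = ((3 * t + 1 : ℕ) : ZMod (3 * k - 1))}

/-- The Andrásfai graph And(k) = Cay(Z_{3k-1}; C). -/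
def andrasfai (k : ℕ) : SimpleGraph (ZMod (3 * k - 1)) :=
  SimpleGraph.fromRel (fun g h => h - g ∈ andrasfaiSet k)

/-- W₀ = {3t : 1 ≤ t ≤ k-1} as a subset of Z_{3k-1}. -/
def andW0 (k : ℕ) : Set (ZMod (3 * k - 1)) :=
  {x | ∃ t, 1 ≤ t ∧ t ≤ k - 1 ∧ x = ((3 * t : ℕ) : ZMod (3 * k - 1))}

/-- V₂ = {3t+2 : 0 ≤ t ≤ k-2} as a subset of Z_{3k-1}. -/
def andV2 (k : ℕ) : Set (ZMod (3 * k - 1)) :=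
  {x | ∃ t ≤ k - 2, x = ((3 * t + 2 : ℕ) : ZMod (3 * k - 1))}

lemma zmod_natCast_eq_iff' (n a b : ℕ) (ha : a < n) (hb : b < 2 * n) :
    ((a : ZMod n) = (b : ZMod n)) ↔ (b = a ∨ b = a + n) := by
  rw [ZMod.natCast_eq_natCast_iff, Nat.ModEq]
  constructor
  · intro h
    rw [Nat.mod_eq_of_lt ha] at h
    rcases lt_or_ge b n with hb' | hb'
    · left; rw [Nat.mod_eq_of_lt hb'] at h; omega
    · right
      rw [Nat.mod_eq_sub_mod hb', Nat.mod_eq_of_lt (by omega)] at h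
      omega
  · rintro (rfl | rfl)
    · rfl
    · rw [Nat.add_mod_right]

theorem andrasfai_induced_degree_W0 (k : ℕ) (hk : 2 ≤ k)
    (j : ℕ) (hj1 : 1 ≤ j) (hj2 : j ≤ k - 1) :
    ((andrasfai k).neighborSet ((3 * j : ℕ) : ZMod (3 * k - 1)) ∩ (andW0 k ∪ andV2 k)).ncard = j ∧
    (andrasfai k).neighborSet ((3 * j : ℕ) : ZMod (3 * k - 1)) ∩ (andW0 k ∪ andV2 k) ⊆ andV2 k := by
  haveI : NeZero (3 * k - 1) := ⟨by omega⟩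
  have key : (andrasfai k).neighborSet ((3 * j : ℕ) : ZMod (3 * k - 1)) ∩ (andW0 k ∪ andV2 k)
      = (fun s : ℕ => ((3 * s + 2 : ℕ) : ZMod (3 * k - 1))) '' Set.Iio j := by
    ext x
    simp only [Set.mem_inter_iff, SimpleGraph.mem_neighborSet, andrasfai,
      SimpleGraph.fromRel_adj, andrasfaiSet, andW0, andV2, Set.mem_union, Set.mem_setOf_eq,
      Set.mem_image, Set.mem_Iio]
    constructor
    · rintro ⟨⟨hne, hrel⟩, hmem⟩
      rcases hmem with ⟨t, ht1, ht2, rfl⟩ | ⟨t, ht, rfl⟩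
      · -- x = 3t ∈ W₀ : contradiction
        exfalso
        rcases hrel with ⟨s, hs, hrel⟩ | ⟨s, hs, hrel⟩
        · have h : ((3 * t : ℕ) : ZMod (3 * k - 1))
              = ((3 * j + (3 * s + 1) : ℕ) : ZMod (3 * k - 1)) := by
            push_cast at hrel ⊢
            linear_combination hrel
          rw [zmod_natCast_eq_iff' _ _ _ (by omega) (by omega)] at h
          omega
        · have h : ((3 * j : ℕ) : ZMod (3 * k - 1))
              = ((3 * t + (3 * s + 1) : ℕ) : ZMod (3 * k - 1)) := by
            push_cast at hrel ⊢
            linear_combination hrel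
          rw [zmod_natCast_eq_iff' _ _ _ (by omega) (by omega)] at h
          omega
      · -- x = 3t+2 ∈ V₂
        rcases hrel with ⟨s, hs, hrel⟩ | ⟨s, hs, hrel⟩
        · have h : ((3 * t + 2 : ℕ) : ZMod (3 * k - 1))
              = ((3 * j + (3 * s + 1) : ℕ) : ZMod (3 * k - 1)) := by
            push_cast at hrel ⊢
            linear_combination hrel
          rw [zmod_natCast_eq_iff' _ _ _ (by omega) (by omega)] at h
          exact ⟨t, by omega, rfl⟩
        · have h : ((3 * j : ℕ) : ZMod (3 * k - 1))
              = (((3 * t + 2) + (3 * s + 1) : ℕ) : ZMod (3 * k - 1)) := by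
            push_cast at hrel ⊢
            linear_combination hrel
          rw [zmod_natCast_eq_iff' _ _ _ (by omega) (by omega)] at h
          exact ⟨t, by omega, rfl⟩
    · rintro ⟨s, hs, rfl⟩
      have hne : ((3 * j : ℕ) : ZMod (3 * k - 1)) ≠ ((3 * s + 2 : ℕ) : ZMod (3 * k - 1)) := by
        intro h
        apply_fun ZMod.val at h
        rw [ZMod.val_cast_of_lt (by omega), ZMod.val_cast_of_lt (by omega)] at h
        omega
      refine ⟨⟨hne, Or.inl ⟨k + s - j, by omega, ?_⟩⟩, Or.inr ⟨s, by omega, rfl⟩⟩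
      have hnat : (3 * j) + (3 * (k + s - j) + 1) = (3 * s + 2) + (3 * k - 1) := by omega
      have h : ((3 * j : ℕ) : ZMod (3 * k - 1)) + ((3 * (k + s - j) + 1 : ℕ) : ZMod (3 * k - 1))
          = ((3 * s + 2 : ℕ) : ZMod (3 * k - 1)) := by
        rw [← Nat.cast_add, hnat, Nat.cast_add, ZMod.natCast_self, add_zero]
      linear_combination -h
  constructor
  · rw [key, Set.ncard_image_of_injOn, show Set.Iio j = ↑(Finset.range j) by ext; simp,
      Set.ncard_coe_finset, Finset.card_range]
    intro a ha b hb h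
    simp only [Set.mem_Iio] at ha hb
    apply_fun ZMod.val at h
    rw [ZMod.val_cast_of_lt (by omega), ZMod.val_cast_of_lt (by omega)] at h
    omega
  · rw [key]
    rintro x ⟨s, hs, rfl⟩
    rw [Set.mem_Iio] at hs
    exact ⟨s, by omega, rfl⟩
end

section
/- For each j with 1 ≤ j ≤ k−1, the vertex 3j is the unique vertex of degree j in the part W_0 of H, and the vertex 3k−1−3j (= −3j in Z_{3k−1}) is the unique vertex of degree j in the part V_2 of H. -/
private lemma eq_mul_cases {n x c : ℤ} (h : x = n * c) (h1 : -n < x) (h2 : x < 2*n)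
    (hn : 0 < n) : x = 0 ∨ x = n := by
  rcases lt_trichotomy c 0 with hc|hc|hc
  · exfalso; nlinarith
  · left; rw [h, hc, mul_zero]
  · rcases (by omega : c = 1 ∨ 2 ≤ c) with rfl|hc2
    · right; simpa using h
    · exfalso; nlinarith

private lemma cast_cases {k a b : ℕ} (hk : 1 ≤ k) (ha : a < 3*k-1) (hb : b < 2*(3*k-1))
    (h : (a : ZMod (3*k-1)) = (b : ZMod (3*k-1))) : b = a ∨ b = a + (3*k-1) := by
  rw [ZMod.natCast_eq_natCast_iff] at h
  obtain ⟨c, hc⟩ := (Nat.modEq_iff_dvd).mp h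
  have h0 : (0:ℤ) < ((3*k-1:ℕ):ℤ) := by omega
  have h1 : -((3*k-1:ℕ):ℤ) < (b:ℤ) - a := by omega
  have h2 : (b:ℤ) - a < 2*((3*k-1:ℕ):ℤ) := by omega
  rcases eq_mul_cases hc h1 h2 h0 with h3 | h3 <;> omega

private lemma andrasfai_adj {k : ℕ} {a b : ZMod (3*k-1)} :
    (andrasfai k).Adj a b ↔ a ≠ b ∧
      ((∃ t < k, b - a = ((3*t+1 : ℕ) : ZMod (3*k-1))) ∨
       (∃ t < k, a - b = ((3*t+1 : ℕ) : ZMod (3*k-1)))) := by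
  simp [andrasfai, andrasfaiSet, SimpleGraph.fromRel_adj, Set.mem_setOf_eq]

private lemma nbrW0 {k s : ℕ} (hk : 2 ≤ k) (hs1 : 1 ≤ s) (hs2 : s ≤ k-1) :
    (andrasfai k).neighborSet ((3*s : ℕ) : ZMod (3*k-1)) ∩ (andW0 k ∪ andV2 k) =
      (fun t => ((3*t+2 : ℕ) : ZMod (3*k-1))) '' Set.Iio s := by
  ext x
  simp only [Set.mem_inter_iff, SimpleGraph.mem_neighborSet, Set.mem_union, Set.mem_image,
    Set.mem_Iio]
  constructor
  · rintro ⟨hadj, hx⟩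
    rw [andrasfai_adj] at hadj
    obtain ⟨hne, hC⟩ := hadj
    rcases hx with ⟨u, hu1, hu2, rfl⟩ | ⟨u, hu, rfl⟩
    · exfalso
      rcases hC with ⟨r, hr, h⟩ | ⟨r, hr, h⟩
      · have h' : ((3*u : ℕ) : ZMod (3*k-1)) = ((3*s + (3*r+1) : ℕ) : ZMod (3*k-1)) := by
          push_cast at h ⊢; linear_combination h
        rcases cast_cases (k := k) (by omega) (by omega) (by omega) h' with h2 | h2 <;> omega
      · have h' : ((3*s : ℕ) : ZMod (3*k-1)) = ((3*u + (3*r+1) : ℕ) : ZMod (3*k-1)) := by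
          push_cast at h ⊢; linear_combination h
        rcases cast_cases (k := k) (by omega) (by omega) (by omega) h' with h2 | h2 <;> omega
    · refine ⟨u, ?_, rfl⟩
      rcases hC with ⟨r, hr, h⟩ | ⟨r, hr, h⟩
      · have h' : ((3*u+2 : ℕ) : ZMod (3*k-1)) = ((3*s + (3*r+1) : ℕ) : ZMod (3*k-1)) := by
          push_cast at h ⊢; linear_combination h
        rcases cast_cases (k := k) (by omega) (by omega) (by omega) h' with h2 | h2 <;> omega
      · have h' : ((3*s : ℕ) : ZMod (3*k-1)) = ((3*u+2 + (3*r+1) : ℕ) : ZMod (3*k-1)) := by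
          push_cast at h ⊢; linear_combination h
        rcases cast_cases (k := k) (by omega) (by omega) (by omega) h' with h2 | h2 <;> omega
  · rintro ⟨t, ht, rfl⟩
    refine ⟨?_, Or.inr ⟨t, by omega, rfl⟩⟩
    rw [andrasfai_adj]
    refine ⟨?_, Or.inr ⟨s - t - 1, by omega, ?_⟩⟩
    · intro h
      rcases cast_cases (k := k) (by omega) (by omega) (by omega) h with h2 | h2 <;> omega
    · rw [sub_eq_iff_eq_add, ← Nat.cast_add]
      congr 1
      omega

private lemma nbrV2 {k t : ℕ} (hk : 2 ≤ k) (ht : t ≤ k-2) :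
    (andrasfai k).neighborSet ((3*t+2 : ℕ) : ZMod (3*k-1)) ∩ (andW0 k ∪ andV2 k) =
      (fun s => ((3*s : ℕ) : ZMod (3*k-1))) '' Set.Ioc t (k-1) := by
  ext x
  simp only [Set.mem_inter_iff, SimpleGraph.mem_neighborSet, Set.mem_union, Set.mem_image,
    Set.mem_Ioc]
  constructor
  · rintro ⟨hadj, hx⟩
    rw [andrasfai_adj] at hadj
    obtain ⟨hne, hC⟩ := hadj
    rcases hx with ⟨u, hu1, hu2, rfl⟩ | ⟨u, hu, rfl⟩
    · refine ⟨u, ⟨?_, hu2⟩, rfl⟩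
      rcases hC with ⟨r, hr, h⟩ | ⟨r, hr, h⟩
      · have h' : ((3*u : ℕ) : ZMod (3*k-1)) = ((3*t+2 + (3*r+1) : ℕ) : ZMod (3*k-1)) := by
          push_cast at h ⊢; linear_combination h
        rcases cast_cases (k := k) (by omega) (by omega) (by omega) h' with h2 | h2 <;> omega
      · have h' : ((3*t+2 : ℕ) : ZMod (3*k-1)) = ((3*u + (3*r+1) : ℕ) : ZMod (3*k-1)) := by
          push_cast at h ⊢; linear_combination h
        rcases cast_cases (k := k) (by omega) (by omega) (by omega) h' with h2 | h2 <;> omega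
    · exfalso
      rcases hC with ⟨r, hr, h⟩ | ⟨r, hr, h⟩
      · have h' : ((3*u+2 : ℕ) : ZMod (3*k-1)) = ((3*t+2 + (3*r+1) : ℕ) : ZMod (3*k-1)) := by
          push_cast at h ⊢; linear_combination h
        rcases cast_cases (k := k) (by omega) (by omega) (by omega) h' with h2 | h2 <;> omega
      · have h' : ((3*t+2 : ℕ) : ZMod (3*k-1)) = ((3*u+2 + (3*r+1) : ℕ) : ZMod (3*k-1)) := by
          push_cast at h ⊢; linear_combination h
        rcases cast_cases (k := k) (by omega) (by omega) (by omega) h' with h2 | h2 <;> omega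
  · rintro ⟨s, ⟨hts, hsk⟩, rfl⟩
    refine ⟨?_, Or.inl ⟨s, by omega, by omega, rfl⟩⟩
    rw [andrasfai_adj]
    refine ⟨?_, Or.inl ⟨s - t - 1, by omega, ?_⟩⟩
    · intro h
      rcases cast_cases (k := k) (by omega) (by omega) (by omega) h with h2 | h2 <;> omega
    · rw [sub_eq_iff_eq_add, ← Nat.cast_add]
      congr 1
      omega

theorem andrasfai_induced_unique_degree (k : ℕ) (hk : 2 ≤ k)
    (j : ℕ) (hj1 : 1 ≤ j) (hj2 : j ≤ k - 1) :
    (∀ v ∈ andW0 k,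
      (((andrasfai k).neighborSet v ∩ (andW0 k ∪ andV2 k)).ncard = j ↔
        v = ((3 * j : ℕ) : ZMod (3 * k - 1)))) ∧
    (∀ w ∈ andV2 k,
      (((andrasfai k).neighborSet w ∩ (andW0 k ∪ andV2 k)).ncard = j ↔
        w = ((3 * k - 1 - 3 * j : ℕ) : ZMod (3 * k - 1)))) := by
  constructor
  · rintro v ⟨s, hs1, hs2, rfl⟩
    rw [nbrW0 hk hs1 hs2]
    have hinj : Set.InjOn (fun t => ((3*t+2 : ℕ) : ZMod (3*k-1))) (Set.Iio s) := by
      intro a ha b hb h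
      simp only [Set.mem_Iio] at ha hb
      rcases cast_cases (k := k) (by omega) (by omega) (by omega) h with h2 | h2 <;> omega
    rw [Set.ncard_image_of_injOn hinj, ← Finset.coe_range, Set.ncard_coe_finset,
      Finset.card_range]
    constructor
    · rintro rfl; rfl
    · intro h
      rcases cast_cases (k := k) (by omega) (by omega) (by omega) h with h2 | h2 <;> omega
  · rintro w ⟨t, ht, rfl⟩
    rw [nbrV2 hk ht]
    have hinj : Set.InjOn (fun s => ((3*s : ℕ) : ZMod (3*k-1))) (Set.Ioc t (k-1)) := by
      intro a ha b hb h
      simp only [Set.mem_Ioc] at ha hb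
      rcases cast_cases (k := k) (by omega) (by omega) (by omega) h with h2 | h2 <;> omega
    rw [Set.ncard_image_of_injOn hinj, ← Finset.coe_Ioc, Set.ncard_coe_finset, Nat.card_Ioc]
    constructor
    · intro h
      have htj : t = k - 1 - j := by omega
      subst htj
      congr 1
      omega
    · intro h
      rcases cast_cases (k := k) (by omega) (by omega) (by omega) h with h2 | h2 <;> omega
end

section
/- The subgraph H of And(k) induced by W_0 ∪ V_2 is connected (for k ≥ 2). -/
/-! Vertex `2` is adjacent to every `3a ∈ W₀`, since `3a - 2 = 3(a-1) + 1 ∈ C`, and every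
`3t+2 ∈ V₂` is adjacent to `3(t+1) ∈ W₀`, since the two differ by `1 ∈ C`. Hence every vertex
of `H` lies within distance two of `2`. -/

lemma andrasfai_adj_natCast_add {k a t : ℕ} (h : a + (3 * t + 1) < 3 * k - 1) :
    (andrasfai k).Adj (a : ZMod (3 * k - 1)) ((a + (3 * t + 1) : ℕ) : ZMod (3 * k - 1)) := by
  rw [andrasfai, SimpleGraph.fromRel_adj]
  refine ⟨fun he => ?_, Or.inl ⟨t, by omega, by push_cast; ring⟩⟩
  rw [ZMod.natCast_eq_natCast_iff', Nat.mod_eq_of_lt (by omega), Nat.mod_eq_of_lt h] at he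
  omega

lemma andrasfai_adj_two_three_mul {k a : ℕ} (ha : 1 ≤ a) (hak : a ≤ k - 1) :
    (andrasfai k).Adj ((2 : ℕ) : ZMod (3 * k - 1)) ((3 * a : ℕ) : ZMod (3 * k - 1)) := by
  have h := andrasfai_adj_natCast_add (k := k) (a := 2) (t := a - 1) (by omega)
  rwa [show 2 + (3 * (a - 1) + 1) = 3 * a by omega] at h

lemma andrasfai_adj_three_mul_add_two {k t : ℕ} (hk : 2 ≤ k) (ht : t ≤ k - 2) :
    (andrasfai k).Adj ((3 * t + 2 : ℕ) : ZMod (3 * k - 1))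
      ((3 * (t + 1) : ℕ) : ZMod (3 * k - 1)) := by
  have h := andrasfai_adj_natCast_add (k := k) (a := 3 * t + 2) (t := 0) (by omega)
  rwa [show 3 * t + 2 + (3 * 0 + 1) = 3 * (t + 1) by omega] at h

theorem andrasfai_induced_connected (k : ℕ) (hk : 2 ≤ k) :
    ((andrasfai k).induce (andW0 k ∪ andV2 k)).Connected := by
  let root : ↥(andW0 k ∪ andV2 k) := ⟨(2 : ℕ), Or.inr ⟨0, Nat.zero_le _, rfl⟩⟩
  have reach_W0 {a : ℕ} (ha : 1 ≤ a) (hak : a ≤ k - 1) :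
      ((andrasfai k).induce (andW0 k ∪ andV2 k)).Reachable root
        ⟨_, Or.inl ⟨a, ha, hak, rfl⟩⟩ :=
    (SimpleGraph.induce_adj.2 (andrasfai_adj_two_three_mul ha hak)).reachable
  refine (SimpleGraph.connected_iff_exists_forall_reachable _).2 ⟨root, ?_⟩
  rintro ⟨x, ⟨a, ha, hak, rfl⟩ | ⟨t, ht, rfl⟩⟩
  · exact reach_W0 ha hak
  · refine (reach_W0 (a := t + 1) (by omega) (by omega)).trans (SimpleGraph.Adj.reachable ?_)
    exact SimpleGraph.induce_adj.2 (andrasfai_adj_three_mul_add_two hk ht).symm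
end

section
/- Any automorphism f of And(k) fixing the vertex 0 and fixing every vertex of W_0 ∪ V_2 pointwise is the identity automorphism. -/
private lemma natCast_inj' {n a b : ℕ} (ha : a < n) (hb : b < n)
    (h : (a : ZMod n) = b) : a = b := by
  have := congrArg ZMod.val h
  rwa [ZMod.val_cast_of_lt ha, ZMod.val_cast_of_lt hb] at this

private lemma not_mem_C {k : ℕ} (hk : 2 ≤ k) {a : ℕ} (ha : a < 3 * k - 1)
    (h3 : a % 3 ≠ 1) : (a : ZMod (3 * k - 1)) ∉ andrasfaiSet k := by
  rintro ⟨t, ht, heq⟩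
  have h1 : 3 * t + 1 < 3 * k - 1 := by omega
  have := natCast_inj' ha h1 heq
  omega

private lemma mem_C {k : ℕ} (hk : 2 ≤ k) {a : ℕ} (ha : a < 3 * k - 1)
    (h3 : a % 3 = 1) : (a : ZMod (3 * k - 1)) ∈ andrasfaiSet k :=
  ⟨a / 3, by omega, by rw [show 3 * (a / 3) + 1 = a by omega]⟩

/-- `cast b - cast a = cast (b + n - a)` -/
private lemma diff_eq (k : ℕ) {a b : ℕ} (h : a ≤ b + (3 * k - 1)) :
    ((b : ZMod (3 * k - 1)) - a) = ((b + (3 * k - 1) - a : ℕ) : ZMod (3 * k - 1)) := by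
  rw [Nat.cast_sub h, Nat.cast_add, ZMod.natCast_self]
  ring

private lemma adjA1 {k : ℕ} (hk : 2 ≤ k) {t : ℕ} (ht : t ≤ k - 2) :
    (andrasfai k).Adj ((3 * t + 1 : ℕ) : ZMod (3 * k - 1)) ((3 * t + 2 : ℕ)) := by
  rw [andrasfai, SimpleGraph.fromRel_adj]
  refine ⟨fun h => by have := natCast_inj' (by omega) (by omega) h; omega, Or.inl ?_⟩
  rw [← Nat.cast_sub (by omega : 3 * t + 1 ≤ 3 * t + 2),
    show 3 * t + 2 - (3 * t + 1) = 1 by omega]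
  exact mem_C hk (by omega) (by omega)

private lemma adjA3 {k : ℕ} (hk : 2 ≤ k) {t : ℕ} (ht1 : 1 ≤ t) (ht : t ≤ k - 1) :
    (andrasfai k).Adj ((3 * t : ℕ) : ZMod (3 * k - 1)) ((3 * t + 1 : ℕ)) := by
  rw [andrasfai, SimpleGraph.fromRel_adj]
  refine ⟨fun h => by have := natCast_inj' (by omega) (by omega) h; omega, Or.inl ?_⟩
  rw [← Nat.cast_sub (by omega : 3 * t ≤ 3 * t + 1),
    show 3 * t + 1 - 3 * t = 1 by omega]
  exact mem_C hk (by omega) (by omega)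

private lemma nonadjA2 {k : ℕ} (hk : 2 ≤ k) {t t' : ℕ} (ht : t ≤ k - 2)
    (ht' : t' ≤ k - 1) (hlt : t < t') :
    ¬ (andrasfai k).Adj ((3 * t' + 1 : ℕ) : ZMod (3 * k - 1)) ((3 * t + 2 : ℕ)) := by
  rw [andrasfai, SimpleGraph.fromRel_adj]
  rintro ⟨hne, h | h⟩
  · rw [diff_eq k (by omega),
      show 3 * t + 2 + (3 * k - 1) - (3 * t' + 1) = 3 * (k + t - t') by omega] at h
    exact not_mem_C hk (by omega) (by omega) h
  · rw [← Nat.cast_sub (by omega : 3 * t + 2 ≤ 3 * t' + 1),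
      show 3 * t' + 1 - (3 * t + 2) = 3 * (t' - t - 1) + 2 by omega] at h
    exact not_mem_C hk (by omega) (by omega) h

private lemma nonadjA4 {k : ℕ} (hk : 2 ≤ k) {t t' : ℕ} (ht1 : 1 ≤ t) (ht : t ≤ k - 1)
    (ht' : t' < t) :
    ¬ (andrasfai k).Adj ((3 * t : ℕ) : ZMod (3 * k - 1)) ((3 * t' + 1 : ℕ)) := by
  rw [andrasfai, SimpleGraph.fromRel_adj]
  rintro ⟨hne, h | h⟩
  · rw [diff_eq k (by omega),
      show 3 * t' + 1 + (3 * k - 1) - 3 * t = 3 * (k + t' - t) by omega] at h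
    exact not_mem_C hk (by omega) (by omega) h
  · rw [← Nat.cast_sub (by omega : 3 * t' + 1 ≤ 3 * t),
      show 3 * t - (3 * t' + 1) = 3 * (t - t' - 1) + 2 by omega] at h
    exact not_mem_C hk (by omega) (by omega) h

theorem andrasfai_fix_identity (k : ℕ) (hk : 2 ≤ k)
    (f : andrasfai k ≃g andrasfai k) (h0 : f 0 = 0)
    (hfix : ∀ v ∈ andW0 k ∪ andV2 k, f v = v) :
    ∀ x, f x = x := by
  haveI : NeZero (3 * k - 1) := ⟨by omega⟩
  -- any vertex with residue ≠ 1 mod 3 is fixed by f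
  have hfixed : ∀ z : ZMod (3 * k - 1), z.val % 3 ≠ 1 → f z = z := by
    intro z hz
    have hzlt := ZMod.val_lt z
    have hzc : ((z.val : ℕ) : ZMod (3 * k - 1)) = z := ZMod.natCast_rightInverse z
    rcases (by omega : z.val % 3 = 0 ∨ z.val % 3 = 1 ∨ z.val % 3 = 2) with h3 | h3 | h3
    · by_cases hz0 : z.val = 0
      · have : z = 0 := by rw [← hzc, hz0]; simp
        rw [this, h0]
      · refine hfix z (Or.inl ⟨z.val / 3, by omega, by omega, ?_⟩)
        rw [show 3 * (z.val / 3) = z.val by omega, hzc]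
    · omega
    · refine hfix z (Or.inr ⟨z.val / 3, by omega, ?_⟩)
      rw [show 3 * (z.val / 3) + 2 = z.val by omega, hzc]
  intro x
  by_cases hx3 : x.val % 3 ≠ 1
  · exact hfixed x hx3
  push_neg at hx3
  have hxlt := ZMod.val_lt x
  have hxc : ((x.val : ℕ) : ZMod (3 * k - 1)) = x := ZMod.natCast_rightInverse x
  set t := x.val / 3 with htdef
  have hxeq : x = ((3 * t + 1 : ℕ) : ZMod (3 * k - 1)) := by
    rw [← hxc]; congr 1; omega
  have htk : t ≤ k - 1 := by omega
  -- f x also has residue 1 mod 3, else x would be fixed via injectivity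
  by_cases hy3 : (f x).val % 3 ≠ 1
  · exact f.injective (hfixed (f x) hy3)
  push_neg at hy3
  set y := f x with hydef
  have hylt := ZMod.val_lt y
  have hyc : ((y.val : ℕ) : ZMod (3 * k - 1)) = y := ZMod.natCast_rightInverse y
  set t' := y.val / 3 with ht'def
  have hyeq : y = ((3 * t' + 1 : ℕ) : ZMod (3 * k - 1)) := by
    rw [← hyc]; congr 1; omega
  have ht'k : t' ≤ k - 1 := by omega
  -- t' ≤ t
  have hle1 : t' ≤ t := by
    rcases Nat.lt_or_ge t (k - 1) with htlt | htge
    · by_contra hgt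
      have hadj : (andrasfai k).Adj x (((3 * t + 2 : ℕ)) : ZMod (3 * k - 1)) := by
        rw [hxeq]; exact adjA1 hk (by omega)
      have hz : f (((3 * t + 2 : ℕ)) : ZMod (3 * k - 1)) = ((3 * t + 2 : ℕ)) :=
        hfix _ (Or.inr ⟨t, by omega, rfl⟩)
      have hadj2 := f.map_rel_iff.mpr hadj
      rw [hz, ← hydef, hyeq] at hadj2
      exact nonadjA2 hk (by omega) ht'k (by omega) hadj2
    · omega
  -- t ≤ t'
  have hle2 : t ≤ t' := by
    rcases Nat.eq_zero_or_pos t with ht0 | htpos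
    · omega
    · by_contra hgt
      have hadj : (andrasfai k).Adj (((3 * t : ℕ)) : ZMod (3 * k - 1)) x := by
        rw [hxeq]; exact adjA3 hk htpos htk
      have hz : f (((3 * t : ℕ)) : ZMod (3 * k - 1)) = ((3 * t : ℕ)) :=
        hfix _ (Or.inl ⟨t, htpos, htk, rfl⟩)
      have hadj2 := f.map_rel_iff.mpr hadj
      rw [hz, ← hydef, hyeq] at hadj2
      exact nonadjA4 hk htpos htk (by omega) hadj2
  have : t = t' := le_antisymm hle2 hle1
  show y = x
  rw [hyeq, hxeq, this]
end

section
/- The stabilizer of the vertex 0 in the automorphism group of And(k) has order 2; it consists of the identity and the negation map x ↦ −x. -/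
namespace AndrasfaiAux

/-- The `t`-th element of the connection set. -/
def cc (k t : ℕ) : ZMod (3 * k - 1) := ((3 * t + 1 : ℕ) : ZMod (3 * k - 1))

variable {k : ℕ}

lemma cast_inj (hk : 2 ≤ k) {a b : ℕ} (ha : a < 3 * k - 1) (hb : b < 3 * k - 1)
    (h : ((a : ℕ) : ZMod (3 * k - 1)) = ((b : ℕ) : ZMod (3 * k - 1))) : a = b := by
  have := congrArg ZMod.val h
  rwa [ZMod.val_natCast_of_lt ha, ZMod.val_natCast_of_lt hb] at this

lemma cast_add_cast {a b c : ℕ} (h : a + b = (3 * k - 1) + c) :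
    ((a : ℕ) : ZMod (3 * k - 1)) + ((b : ℕ) : ZMod (3 * k - 1))
      = ((c : ℕ) : ZMod (3 * k - 1)) := by
  have h2 : ((a + b : ℕ) : ZMod (3 * k - 1)) = (((3 * k - 1) + c : ℕ) : ZMod (3 * k - 1)) := by
    rw [h]
  rwa [Nat.cast_add, Nat.cast_add, ZMod.natCast_self, zero_add] at h2

lemma cast_add_cast' {a b c : ℕ} (h : a + b = c) :
    ((a : ℕ) : ZMod (3 * k - 1)) + ((b : ℕ) : ZMod (3 * k - 1))
      = ((c : ℕ) : ZMod (3 * k - 1)) := by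
  rw [← Nat.cast_add, h]

lemma notMem_mul3 (hk : 2 ≤ k) {m : ℕ} (hm : 3 * m < 3 * k - 1) :
    ((3 * m : ℕ) : ZMod (3 * k - 1)) ∉ andrasfaiSet k := by
  rintro ⟨t, ht, he⟩
  have := cast_inj hk hm (by omega) he
  omega

lemma notMem_mul3add2 (hk : 2 ≤ k) {m : ℕ} (hm : 3 * m + 2 < 3 * k - 1) :
    ((3 * m + 2 : ℕ) : ZMod (3 * k - 1)) ∉ andrasfaiSet k := by
  rintro ⟨t, ht, he⟩
  have := cast_inj hk hm (by omega) he
  omega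

lemma cc_inj (hk : 2 ≤ k) {t t' : ℕ} (ht : t < k) (ht' : t' < k)
    (h : cc k t = cc k t') : t = t' := by
  have := cast_inj hk (a := 3 * t + 1) (b := 3 * t' + 1) (by omega) (by omega) h
  omega

lemma cc_mem (t : ℕ) (ht : t < k) : cc k t ∈ andrasfaiSet k := ⟨t, ht, rfl⟩

lemma adj_iff (hk : 2 ≤ k) (x y : ZMod (3 * k - 1)) :
    (andrasfai k).Adj x y ↔ y - x ∈ andrasfaiSet k := by
  have hC : ∀ z : ZMod (3 * k - 1), z ∈ andrasfaiSet k → -z ∈ andrasfaiSet k := by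
    rintro z ⟨t, ht, rfl⟩
    refine ⟨k - 1 - t, by omega, ?_⟩
    have h := cast_add_cast (k := k) (a := 3 * t + 1) (b := 3 * (k - 1 - t) + 1) (c := 0)
      (by omega)
    rw [Nat.cast_zero] at h
    linear_combination -h
  rw [andrasfai, SimpleGraph.fromRel_adj]
  constructor
  · rintro ⟨hne, h | h⟩
    · exact h
    · have := hC _ h; rwa [neg_sub] at this
  · intro h
    refine ⟨?_, Or.inl h⟩
    rintro rfl
    rw [sub_self] at h
    have h0 : ((3 * 0 : ℕ) : ZMod (3 * k - 1)) ∉ andrasfaiSet k := notMem_mul3 hk (by omega)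
    simp only [Nat.mul_zero, Nat.cast_zero] at h0
    exact h0 h

lemma adj_mul3 (hk : 2 ≤ k) {s t : ℕ} (hs : s ≤ k - 1) (ht : t < k) :
    (andrasfai k).Adj ((3 * s : ℕ) : ZMod (3 * k - 1)) (cc k t) ↔ s ≤ t := by
  rw [adj_iff hk]
  constructor
  · intro h
    by_contra hst
    push_neg at hst
    have he : cc k t - ((3 * s : ℕ) : ZMod (3 * k - 1))
        = ((3 * (k + t - s) : ℕ) : ZMod (3 * k - 1)) := by
      have h2 := cast_add_cast (k := k) (a := 3 * s) (b := 3 * (k + t - s)) (c := 3 * t + 1)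
        (by omega)
      rw [sub_eq_iff_eq_add']
      exact h2.symm
    rw [he] at h
    exact notMem_mul3 hk (by omega) h
  · intro hst
    have he : cc k t - ((3 * s : ℕ) : ZMod (3 * k - 1))
        = ((3 * (t - s) + 1 : ℕ) : ZMod (3 * k - 1)) := by
      have h2 := cast_add_cast' (k := k) (a := 3 * s) (b := 3 * (t - s) + 1) (c := 3 * t + 1)
        (by omega)
      rw [sub_eq_iff_eq_add']
      exact h2.symm
    rw [he]
    exact ⟨t - s, by omega, rfl⟩

lemma adj_mul3add2 (hk : 2 ≤ k) {s t : ℕ} (hs : s ≤ k - 2) (ht : t < k) :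
    (andrasfai k).Adj ((3 * s + 2 : ℕ) : ZMod (3 * k - 1)) (cc k t) ↔ t ≤ s := by
  rw [adj_iff hk]
  constructor
  · intro h
    by_contra hst
    push_neg at hst
    have he : cc k t - ((3 * s + 2 : ℕ) : ZMod (3 * k - 1))
        = ((3 * (t - s - 1) + 2 : ℕ) : ZMod (3 * k - 1)) := by
      have h2 := cast_add_cast' (k := k) (a := 3 * s + 2) (b := 3 * (t - s - 1) + 2)
        (c := 3 * t + 1) (by omega)
      rw [sub_eq_iff_eq_add']
      exact h2.symm
    rw [he] at h
    exact notMem_mul3add2 hk (by omega) h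
  · intro hst
    have he : cc k t - ((3 * s + 2 : ℕ) : ZMod (3 * k - 1))
        = ((3 * (k + t - s - 1) + 1 : ℕ) : ZMod (3 * k - 1)) := by
      have h2 := cast_add_cast (k := k) (a := 3 * s + 2) (b := 3 * (k + t - s - 1) + 1)
        (c := 3 * t + 1) (by omega)
      rw [sub_eq_iff_eq_add']
      exact h2.symm
    rw [he]
    exact ⟨k + t - s - 1, by omega, rfl⟩

lemma classify (hk : 2 ≤ k) {x : ZMod (3 * k - 1)} (hx : x ∉ andrasfaiSet k) :
    (∃ s ≤ k - 1, x = ((3 * s : ℕ) : ZMod (3 * k - 1))) ∨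
    (∃ s ≤ k - 2, x = ((3 * s + 2 : ℕ) : ZMod (3 * k - 1))) := by
  haveI : NeZero (3 * k - 1) := ⟨by omega⟩
  obtain ⟨a, ha, rfl⟩ : ∃ a, a < 3 * k - 1 ∧ x = ((a : ℕ) : ZMod (3 * k - 1)) :=
    ⟨x.val, x.val_lt, (ZMod.natCast_rightInverse x).symm⟩
  have h3 : a % 3 = 0 ∨ a % 3 = 1 ∨ a % 3 = 2 := by omega
  rcases h3 with h | h | h
  · exact Or.inl ⟨a / 3, by omega, by congr 1; omega⟩
  · exact absurd ⟨a / 3, by omega, by congr 1; omega⟩ hx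
  · exact Or.inr ⟨a / 3, by omega, by congr 1; omega⟩

lemma mem_iff_f_mem (hk : 2 ≤ k) (f : andrasfai k ≃g andrasfai k) (hf : f 0 = 0)
    (x : ZMod (3 * k - 1)) : f x ∈ andrasfaiSet k ↔ x ∈ andrasfaiSet k := by
  have h1 : ∀ z : ZMod (3 * k - 1), z ∈ andrasfaiSet k ↔ (andrasfai k).Adj 0 z := by
    intro z; rw [adj_iff hk, sub_zero]
  rw [h1, h1]
  conv_lhs => rw [← hf]
  exact f.map_adj_iff

lemma nbr_in_C (hk : 2 ≤ k) (f : andrasfai k ≃g andrasfai k) (hf : f 0 = 0)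
    (x : ZMod (3 * k - 1)) {z : ZMod (3 * k - 1)} (hz : z ∈ andrasfaiSet k)
    (hadj : (andrasfai k).Adj (f x) z) :
    ∃ t, t < k ∧ z = f (cc k t) ∧ (andrasfai k).Adj x (cc k t) := by
  obtain ⟨w, rfl⟩ : ∃ w, z = f w := ⟨f.symm z, (f.apply_symm_apply z).symm⟩
  have hw : w ∈ andrasfaiSet k := (mem_iff_f_mem hk f hf w).mp hz
  obtain ⟨t, ht, rfl⟩ := hw
  exact ⟨t, ht, rfl, f.map_adj_iff.mp hadj⟩

lemma stab_top (hk : 2 ≤ k) (f : andrasfai k ≃g andrasfai k) (hf : f 0 = 0) :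
    f (cc k (k - 1)) = cc k (k - 1) ∨ f (cc k (k - 1)) = cc k 0 := by
  set x : ZMod (3 * k - 1) := ((3 * (k - 1) : ℕ) : ZMod (3 * k - 1)) with hxdef
  have hxC : x ∉ andrasfaiSet k := notMem_mul3 hk (by omega)
  have hyC : f x ∉ andrasfaiSet k := fun h => hxC ((mem_iff_f_mem hk f hf x).mp h)
  have hxadj : ∀ t, t < k → ((andrasfai k).Adj x (cc k t) ↔ t = k - 1) := by
    intro t ht
    rw [hxdef, adj_mul3 hk (le_refl _) ht]
    omega
  rcases classify hk hyC with ⟨u, hu, hyu⟩ | ⟨u, hu, hyu⟩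
  · left
    have hadj : (andrasfai k).Adj (f x) (cc k (k - 1)) := by
      rw [hyu]
      exact (adj_mul3 hk hu (by omega)).mpr hu
    obtain ⟨t, ht, hzeq, hadjx⟩ := nbr_in_C hk f hf x (cc_mem (k - 1) (by omega)) hadj
    have htk : t = k - 1 := (hxadj t ht).mp hadjx
    rw [htk] at hzeq
    exact hzeq.symm
  · right
    have hadj : (andrasfai k).Adj (f x) (cc k 0) := by
      rw [hyu]
      exact (adj_mul3add2 hk hu (by omega)).mpr (by omega)
    obtain ⟨t, ht, hzeq, hadjx⟩ := nbr_in_C hk f hf x (cc_mem 0 (by omega)) hadj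
    have htk : t = k - 1 := (hxadj t ht).mp hadjx
    rw [htk] at hzeq
    exact hzeq.symm

lemma stab_id_on_C (hk : 2 ≤ k) (f : andrasfai k ≃g andrasfai k) (hf : f 0 = 0)
    (htop : f (cc k (k - 1)) = cc k (k - 1)) :
    ∀ t, t < k → f (cc k t) = cc k t := by
  suffices H : ∀ j t, t < k → k - 1 - j ≤ t → f (cc k t) = cc k t by
    intro t ht
    exact H (k - 1) t ht (by omega)
  intro j
  induction j with
  | zero =>
    intro t ht h
    have : t = k - 1 := by omega
    rw [this]
    exact htop
  | succ j ih =>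
    intro s hs hst
    rcases le_or_gt (k - 1 - j) s with h' | h'
    · exact ih s hs h'
    have hs2 : s ≤ k - 2 := by omega
    have hsucc : ∀ t', s < t' → t' < k → f (cc k t') = cc k t' :=
      fun t' h1 h2 => ih t' h2 (by omega)
    set x : ZMod (3 * k - 1) := ((3 * s : ℕ) : ZMod (3 * k - 1)) with hxdef
    have hxC : x ∉ andrasfaiSet k := notMem_mul3 hk (by omega)
    have hyC : f x ∉ andrasfaiSet k := fun h => hxC ((mem_iff_f_mem hk f hf x).mp h)
    have hxadj : ∀ u, u < k → ((andrasfai k).Adj x (cc k u) ↔ s ≤ u) := by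
      intro u hu
      rw [hxdef, adj_mul3 hk (by omega) hu]
    rcases classify hk hyC with ⟨u, hu, hyu⟩ | ⟨u, hu, hyu⟩
    · -- f x = 3u
      have hus : u ≤ s := by
        by_contra hgt
        push_neg at hgt
        have h1 : (andrasfai k).Adj (f x) (f (cc k s)) :=
          f.map_adj_iff.mpr ((hxadj s (by omega)).mpr le_rfl)
        obtain ⟨m, hm, hmeq⟩ := (mem_iff_f_mem hk f hf (cc k s)).mpr (cc_mem s (by omega))
        rw [hmeq, hyu] at h1
        have hum : u ≤ m := (adj_mul3 hk hu hm).mp h1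
        have hmm : f (cc k m) = cc k m := hsucc m (by omega) hm
        have heq : cc k s = cc k m := f.injective (hmeq.trans hmm.symm)
        have := cc_inj hk (by omega) hm heq
        omega
      have hadj : (andrasfai k).Adj (f x) (cc k s) := by
        rw [hyu]
        exact (adj_mul3 hk hu (by omega)).mpr hus
      obtain ⟨m, hm, hzeq, hadjx⟩ := nbr_in_C hk f hf x (cc_mem s (by omega)) hadj
      have hsm : s ≤ m := (hxadj m hm).mp hadjx
      rcases eq_or_lt_of_le hsm with h | h
      · rw [← h] at hzeq
        exact hzeq.symm
      · have hmm : f (cc k m) = cc k m := hsucc m h hm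
        rw [hmm] at hzeq
        have := cc_inj hk (by omega) hm hzeq
        omega
    · -- f x = 3u + 2 : impossible
      exfalso
      have htop' : f (cc k (k - 1)) = cc k (k - 1) := hsucc (k - 1) (by omega) (by omega)
      have h1 : (andrasfai k).Adj (f x) (f (cc k (k - 1))) :=
        f.map_adj_iff.mpr ((hxadj (k - 1) (by omega)).mpr (by omega))
      rw [htop', hyu] at h1
      have := (adj_mul3add2 hk hu (by omega)).mp h1
      omega

lemma id_of_id_on_C (hk : 2 ≤ k) (f : andrasfai k ≃g andrasfai k) (hf : f 0 = 0)
    (hC : ∀ t, t < k → f (cc k t) = cc k t) :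
    ∀ x, f x = x := by
  intro x
  by_cases hx : x ∈ andrasfaiSet k
  · obtain ⟨t, ht, rfl⟩ := hx
    exact hC t ht
  · have hyC : f x ∉ andrasfaiSet k := fun h => hx ((mem_iff_f_mem hk f hf x).mp h)
    have key : ∀ t, t < k →
        ((andrasfai k).Adj x (cc k t) ↔ (andrasfai k).Adj (f x) (cc k t)) := by
      intro t ht
      conv_rhs => rw [← hC t ht]
      exact f.map_adj_iff.symm
    rcases classify hk hx with ⟨s, hs, hxe⟩ | ⟨s, hs, hxe⟩ <;>
      rcases classify hk hyC with ⟨u, hu, hyu⟩ | ⟨u, hu, hyu⟩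
    · -- x = 3s, f x = 3u
      have e1 : u ≤ s := by
        have h1 := (key s (by omega)).mp
          (by rw [hxe]; exact (adj_mul3 hk hs (by omega)).mpr le_rfl)
        rw [hyu] at h1
        exact (adj_mul3 hk hu (by omega)).mp h1
      have e2 : s ≤ u := by
        have h1 := (key u (by omega)).mpr
          (by rw [hyu]; exact (adj_mul3 hk hu (by omega)).mpr le_rfl)
        rw [hxe] at h1
        exact (adj_mul3 hk hs (by omega)).mp h1
      rw [hyu, hxe]
      congr 1
      omega
    · -- x = 3s, f x = 3u+2 : impossible
      exfalso
      have h1 := (key (k - 1) (by omega)).mp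
        (by rw [hxe]; exact (adj_mul3 hk hs (by omega)).mpr hs)
      rw [hyu] at h1
      have := (adj_mul3add2 hk hu (by omega)).mp h1
      omega
    · -- x = 3s+2, f x = 3u : impossible
      exfalso
      have h1 := (key (k - 1) (by omega)).mpr
        (by rw [hyu]; exact (adj_mul3 hk hu (by omega)).mpr hu)
      rw [hxe] at h1
      have := (adj_mul3add2 hk hs (by omega)).mp h1
      omega
    · -- x = 3s+2, f x = 3u+2
      have e1 : s ≤ u := by
        have h1 := (key s (by omega)).mp
          (by rw [hxe]; exact (adj_mul3add2 hk hs (by omega)).mpr le_rfl)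
        rw [hyu] at h1
        exact (adj_mul3add2 hk hu (by omega)).mp h1
      have e2 : u ≤ s := by
        have h1 := (key u (by omega)).mpr
          (by rw [hyu]; exact (adj_mul3add2 hk hu (by omega)).mpr le_rfl)
        rw [hxe] at h1
        exact (adj_mul3add2 hk hs (by omega)).mp h1
      rw [hyu, hxe]
      congr 1
      omega

/-- Negation as an automorphism of the Andrásfai graph. -/
def negIso (k : ℕ) : andrasfai k ≃g andrasfai k where
  toEquiv := Equiv.neg (ZMod (3 * k - 1))
  map_rel_iff' := by
    intro a b
    simp only [Equiv.neg_apply, andrasfai, SimpleGraph.fromRel_adj, neg_sub_neg, ne_eq,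
      neg_inj]
    tauto

lemma negIso_apply (x : ZMod (3 * k - 1)) : negIso k x = -x := rfl

lemma dichotomy (hk : 2 ≤ k) (f : andrasfai k ≃g andrasfai k) (hf : f 0 = 0) :
    (∀ x, f x = x) ∨ (∀ x, f x = -x) := by
  rcases stab_top hk f hf with h | h
  · exact Or.inl (id_of_id_on_C hk f hf (stab_id_on_C hk f hf h))
  · right
    set g : andrasfai k ≃g andrasfai k := f.trans (negIso k) with hg
    have hgx : ∀ x, g x = -(f x) := fun x => rfl
    have hg0 : g 0 = 0 := by rw [hgx, hf, neg_zero]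
    have hgtop : g (cc k (k - 1)) = cc k (k - 1) := by
      rw [hgx, h]
      show -((3 * 0 + 1 : ℕ) : ZMod (3 * k - 1)) = ((3 * (k - 1) + 1 : ℕ) : ZMod (3 * k - 1))
      have h2 := cast_add_cast (k := k) (a := 3 * 0 + 1) (b := 3 * (k - 1) + 1) (c := 0)
        (by omega)
      rw [Nat.cast_zero] at h2
      linear_combination -h2
    have hid := id_of_id_on_C hk g hg0 (stab_id_on_C hk g hg0 hgtop)
    intro x
    have hx := hid x
    rw [hgx] at hx
    exact neg_eq_iff_eq_neg.mp hx

end AndrasfaiAux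

open AndrasfaiAux in
theorem andrasfai_stabilizer_zero (k : ℕ) (hk : 2 ≤ k) :
    Nat.card {f : andrasfai k ≃g andrasfai k // f 0 = 0} = 2 ∧
    ∀ f : andrasfai k ≃g andrasfai k, f 0 = 0 →
      (∀ x, f x = x) ∨ (∀ x, f x = -x) := by
  refine ⟨?_, fun f hf => dichotomy hk f hf⟩
  rw [Nat.card_eq_two_iff]
  refine ⟨⟨RelIso.refl _, rfl⟩, ⟨negIso k, neg_zero⟩, ?_, ?_⟩
  · intro hcontra
    have h1 : (RelIso.refl (andrasfai k).Adj : andrasfai k ≃g andrasfai k) = negIso k :=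
      congrArg Subtype.val hcontra
    have h2 : cc k 0 = -(cc k 0) := by
      calc cc k 0 = (RelIso.refl (andrasfai k).Adj) (cc k 0) := rfl
        _ = negIso k (cc k 0) := by rw [h1]
        _ = -(cc k 0) := rfl
    have h3 : ((2 : ℕ) : ZMod (3 * k - 1)) = ((0 : ℕ) : ZMod (3 * k - 1)) := by
      have h4 : cc k 0 + cc k 0 = 0 := by
        nth_rewrite 2 [h2]
        rw [add_neg_cancel]
      show ((2 : ℕ) : ZMod (3 * k - 1)) = _
      push_cast
      push_cast [cc] at h4
      linear_combination h4
    have := cast_inj hk (a := 2) (b := 0) (by omega) (by omega) h3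
    omega
  · rw [Set.eq_univ_iff_forall]
    rintro ⟨f, hf⟩
    rcases dichotomy hk f hf with h | h
    · left
      apply Subtype.ext
      exact DFunLike.ext _ _ h
    · right
      apply Subtype.ext
      exact DFunLike.ext _ _ h
end

section
/- The automorphism group of And(k) has order 2(3k−1). -/
/-!
The affine maps `x ↦ ±x + b` are `2(3k-1)` distinct automorphisms of any Cayley graph on
`ℤ/(3k-1)`. Conversely, in `And(k)` the common neighbourhood of `0` and `±3j` (`0 < j < k`) is
`{3j+1, …, 3k-2}` resp. its negative, of size `k - j`, while adjacent vertices have none, so two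
vertices have exactly `k - 1` common neighbours iff they differ by `±3`. Hence an automorphism
fixing `0` sends `3` to `±3`, say `3` after composing with `x ↦ -x`, and then each step
`3m ↦ 3(m+1)` must be sent forward rather than back to `3(m-1)` by injectivity. Since `3` generates
`ℤ/(3k-1)`, the automorphism is the identity.
-/

open Function SimpleGraph

theorem ZMod.val_sub_eq_ite {n : ℕ} [NeZero n] (a b : ZMod n) :
    (a - b).val = if b.val ≤ a.val then a.val - b.val else n + a.val - b.val := by
  split_ifs with h
  · exact ZMod.val_sub h
  · have hba : a.val ≤ b.val := by omega
    have hne : b - a ≠ 0 := by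
      rw [sub_ne_zero]; rintro rfl; omega
    rw [← neg_sub, ZMod.neg_val, if_neg hne, ZMod.val_sub hba]
    have := ZMod.val_lt b
    omega

theorem ZMod.val_neg_mod_three_eq_one_iff {n : ℕ} [NeZero n] (hn : n % 3 = 2) (x : ZMod n) :
    (-x).val % 3 = 1 ↔ x.val % 3 = 1 := by
  rw [ZMod.neg_val]
  split_ifs with h
  · simp [h]
  · have := ZMod.val_lt x
    omega

theorem ZMod.exists_nsmul_natCast_eq {n a : ℕ} [NeZero n] (ha : a.Coprime n) (x : ZMod n) :
    ∃ m : ℕ, m • (a : ZMod n) = x := by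
  refine ⟨(((ZMod.unitOfCoprime a ha)⁻¹ : (ZMod n)ˣ) * x).val, ?_⟩
  rw [nsmul_eq_mul, ZMod.natCast_zmod_val, mul_comm, ← mul_assoc, ← ZMod.coe_unitOfCoprime a ha,
    Units.mul_inv, one_mul]

theorem Function.Injective.map_nsmul_eq_nsmul {G : Type*} [AddCommGroup G] {f : G → G}
    (hf : Injective f) {g : G} (hg2 : g + g ≠ 0) (h0 : f 0 = 0) (hg : f g = g)
    (hstep : ∀ x, f (x + g) - f x = g ∨ f x - f (x + g) = g) (m : ℕ) :
    f (m • g) = m • g := by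
  suffices ∀ m : ℕ, f (m • g) = m • g ∧ f ((m + 1) • g) = (m + 1) • g from (this m).1
  intro m
  induction m with
  | zero => simp [h0, hg]
  | succ m ih =>
    obtain ⟨hm, hm1⟩ := ih
    refine ⟨hm1, ?_⟩
    rw [succ_nsmul g (m + 1)]
    rcases hstep ((m + 1) • g) with h | h
    · rw [sub_eq_iff_eq_add, hm1] at h
      rw [h, add_comm]
    · have hback : f ((m + 1) • g + g) = f (m • g) := by
        rw [← sub_sub_cancel (f ((m + 1) • g)) (f ((m + 1) • g + g)), h, hm1, hm, succ_nsmul,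
          add_sub_cancel_right]
      refine absurd (hf hback) fun h' => hg2 ?_
      rw [succ_nsmul, add_assoc] at h'
      simpa using h'

theorem SimpleGraph.Iso.ncard_commonNeighbors {V W : Type*} {G : SimpleGraph V}
    {G' : SimpleGraph W} (e : G ≃g G') (v w : V) :
    (G'.commonNeighbors (e v) (e w)).ncard = (G.commonNeighbors v w).ncard := by
  have : G'.commonNeighbors (e v) (e w) = e '' G.commonNeighbors v w := by
    ext u
    obtain ⟨u, rfl⟩ := e.surjective u
    simp [mem_commonNeighbors, e.map_adj_iff]
  rw [this, Set.ncard_image_of_injective _ e.injective]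

def addCayleyGraph {G : Type*} [AddCommGroup G] (S : Set G) : SimpleGraph G :=
  fromRel fun g h => h - g ∈ S

namespace addCayleyGraph

variable {G : Type*} [AddCommGroup G] (S : Set G)

def affineIso (u : ℤˣ) (b : G) : addCayleyGraph S ≃g addCayleyGraph S where
  toFun x := (u : ℤ) • x + b
  invFun y := (u : ℤ) • (y - b)
  left_inv x := by simp [smul_smul, ← Units.val_mul, Int.units_mul_self]
  right_inv y := by simp [smul_smul, ← Units.val_mul, Int.units_mul_self]
  map_rel_iff' := by
    intro x y
    rcases Int.units_eq_one_or u with rfl | rfl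
    · simp [addCayleyGraph]
    · simp [addCayleyGraph, neg_add_eq_sub, or_comm]

theorem affineIso_apply (u : ℤˣ) (b x : G) : affineIso S u b x = (u : ℤ) • x + b := rfl

theorem affineIso_injective {x : G} (hx : x + x ≠ 0) :
    Injective fun p : ℤˣ × G => affineIso S p.1 p.2 := by
  rintro ⟨u, b⟩ ⟨u', b'⟩ h
  have hb : b = b' := by simpa [affineIso_apply] using DFunLike.congr_fun h 0
  subst hb
  have hu : (u : ℤ) • x = (u' : ℤ) • x := by simpa [affineIso_apply] using DFunLike.congr_fun h x
  rcases Int.units_eq_one_or u with rfl | rfl <;> rcases Int.units_eq_one_or u' with rfl | rfl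
  all_goals first | rfl | simp [eq_neg_iff_add_eq_zero, hx, neg_eq_iff_add_eq_zero] at hu

end addCayleyGraph

section Andrasfai

variable {k : ℕ}

theorem mem_andrasfaiSet_iff (hk : 0 < k) {x : ZMod (3 * k - 1)} :
    x ∈ andrasfaiSet k ↔ x.val % 3 = 1 := by
  constructor
  · rintro ⟨t, ht, rfl⟩
    rw [ZMod.val_natCast_of_lt (by omega)]
    omega
  · intro h
    have : NeZero (3 * k - 1) := ⟨by omega⟩
    have := ZMod.val_lt x
    refine ⟨x.val / 3, by omega, ?_⟩
    rw [show 3 * (x.val / 3) + 1 = x.val by omega, ZMod.natCast_zmod_val]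

theorem andrasfai_adj_iff (hk : 0 < k) {x y : ZMod (3 * k - 1)} :
    (andrasfai k).Adj x y ↔ (y - x).val % 3 = 1 := by
  have : NeZero (3 * k - 1) := ⟨by omega⟩
  have h3 : (3 * k - 1) % 3 = 2 := by omega
  rw [andrasfai, fromRel_adj, mem_andrasfaiSet_iff hk, mem_andrasfaiSet_iff hk, ← neg_sub y x,
    ZMod.val_neg_mod_three_eq_one_iff h3, or_self, and_iff_right_iff_imp]
  rintro h rfl
  simp at h

theorem andrasfai_commonNeighbors_zero_of_val_mod_three_eq_zero (hk : 0 < k)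
    {v : ZMod (3 * k - 1)} (hv : v.val % 3 = 0) :
    (andrasfai k).commonNeighbors 0 v =
      (fun t : ℕ => ((3 * t + 1 : ℕ) : ZMod (3 * k - 1))) '' Set.Ico (v.val / 3) k := by
  have : NeZero (3 * k - 1) := ⟨by omega⟩
  have hvn := ZMod.val_lt v
  ext c
  simp only [mem_commonNeighbors, andrasfai_adj_iff hk, sub_zero, Set.mem_image, Set.mem_Ico]
  rw [ZMod.val_sub_eq_ite]
  constructor
  · rintro ⟨hc, hcv⟩
    have hcn := ZMod.val_lt c
    refine ⟨c.val / 3, ⟨?_, by omega⟩, ?_⟩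
    · split_ifs at hcv <;> omega
    · rw [show 3 * (c.val / 3) + 1 = c.val by omega, ZMod.natCast_zmod_val]
  · rintro ⟨t, ⟨hvt, htk⟩, rfl⟩
    rw [ZMod.val_natCast_of_lt (by omega)]
    split_ifs <;> omega

theorem andrasfai_ncard_commonNeighbors_zero_of_val_mod_three_eq_zero (hk : 0 < k)
    {v : ZMod (3 * k - 1)} (hv : v.val % 3 = 0) :
    ((andrasfai k).commonNeighbors 0 v).ncard = k - v.val / 3 := by
  rw [andrasfai_commonNeighbors_zero_of_val_mod_three_eq_zero hk hv, Set.InjOn.ncard_image,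
    Set.ncard_Ico_nat]
  intro s hs t ht hst
  simp only [Set.mem_Ico] at hs ht
  have := congrArg ZMod.val hst
  rwa [ZMod.val_natCast_of_lt (by omega), ZMod.val_natCast_of_lt (by omega), add_left_inj,
    mul_right_inj' three_ne_zero] at this

theorem andrasfai_commonNeighbors_zero_of_val_mod_three_eq_one (hk : 0 < k)
    {v : ZMod (3 * k - 1)} (hv : v.val % 3 = 1) :
    (andrasfai k).commonNeighbors 0 v = ∅ := by
  have : NeZero (3 * k - 1) := ⟨by omega⟩
  have hvn := ZMod.val_lt v
  ext c
  simp only [mem_commonNeighbors, andrasfai_adj_iff hk, sub_zero, Set.mem_empty_iff_false,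
    iff_false, not_and]
  rw [ZMod.val_sub_eq_ite]
  split_ifs <;> omega

variable (k) in
/-- `andrasfai k` is `addCayleyGraph (andrasfaiSet k)` only after unfolding, so the affine
isomorphisms are restated at the type `andrasfai k ≃g andrasfai k`. -/
def andrasfaiAffineIso (u : ℤˣ) (b : ZMod (3 * k - 1)) : andrasfai k ≃g andrasfai k :=
  addCayleyGraph.affineIso (andrasfaiSet k) u b

theorem andrasfaiAffineIso_apply (u : ℤˣ) (b x : ZMod (3 * k - 1)) :
    andrasfaiAffineIso k u b x = (u : ℤ) • x + b :=
  rfl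

theorem andrasfai_ncard_commonNeighbors_neg (v w : ZMod (3 * k - 1)) :
    ((andrasfai k).commonNeighbors (-v) (-w)).ncard = ((andrasfai k).commonNeighbors v w).ncard := by
  simpa [andrasfaiAffineIso_apply] using (andrasfaiAffineIso k (-1) 0).ncard_commonNeighbors v w

theorem andrasfai_ncard_commonNeighbors_eq_zero_sub (x y : ZMod (3 * k - 1)) :
    ((andrasfai k).commonNeighbors x y).ncard =
      ((andrasfai k).commonNeighbors 0 (y - x)).ncard := by
  simpa [andrasfaiAffineIso_apply] using (andrasfaiAffineIso k 1 x).ncard_commonNeighbors 0 (y - x)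

theorem andrasfai_ncard_commonNeighbors_zero_eq_iff (hk : 2 ≤ k) (v : ZMod (3 * k - 1)) :
    ((andrasfai k).commonNeighbors 0 v).ncard = k - 1 ↔ v = 3 ∨ -v = 3 := by
  have : NeZero (3 * k - 1) := ⟨by omega⟩
  have hvn := ZMod.val_lt v
  have h3 : (3 : ZMod (3 * k - 1)).val = 3 := ZMod.val_ofNat_of_lt (show 3 < 3 * k - 1 by omega)
  have h30 : (3 : ZMod (3 * k - 1)) ≠ 0 := fun h => by simp [h] at h3
  have heq : v = 3 ↔ v.val = 3 := by rw [← (ZMod.val_injective _).eq_iff, h3]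
  have hneg_eq : -v = 3 ↔ v.val = 3 * k - 4 := by
    rw [neg_eq_iff_eq_neg, ← (ZMod.val_injective _).eq_iff, ZMod.neg_val, if_neg h30, h3]
    omega
  rw [heq, hneg_eq]
  rcases (by omega : v.val % 3 = 0 ∨ v.val % 3 = 1 ∨ v.val % 3 = 2) with h | h | h
  · rw [andrasfai_ncard_commonNeighbors_zero_of_val_mod_three_eq_zero (by omega) h]
    omega
  · rw [andrasfai_commonNeighbors_zero_of_val_mod_three_eq_one (by omega) h, Set.ncard_empty]
    omega
  · have hv0 : v ≠ 0 := by rintro rfl; simp at h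
    have hneg : (-v).val = 3 * k - 1 - v.val := by rw [ZMod.neg_val, if_neg hv0]
    rw [← andrasfai_ncard_commonNeighbors_neg, neg_zero,
      andrasfai_ncard_commonNeighbors_zero_of_val_mod_three_eq_zero (by omega) (by omega), hneg]
    omega

theorem andrasfai_ncard_commonNeighbors_eq_iff (hk : 2 ≤ k) (x y : ZMod (3 * k - 1)) :
    ((andrasfai k).commonNeighbors x y).ncard = k - 1 ↔ y - x = 3 ∨ x - y = 3 := by
  rw [andrasfai_ncard_commonNeighbors_eq_zero_sub, andrasfai_ncard_commonNeighbors_zero_eq_iff hk,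
    neg_sub]

theorem ZMod.three_add_three_ne_zero (hk : 2 ≤ k) : (3 : ZMod (3 * k - 1)) + 3 ≠ 0 := by
  rw [show (3 : ZMod (3 * k - 1)) + 3 = ((6 : ℕ) : ZMod (3 * k - 1)) by norm_num,
    Ne, ZMod.natCast_eq_zero_iff]
  intro hdvd
  have := Nat.le_of_dvd (by norm_num) hdvd
  obtain rfl : k = 2 := by omega
  norm_num at hdvd

theorem andrasfai_exists_units_of_map_zero (hk : 2 ≤ k) (e : andrasfai k ≃g andrasfai k)
    (he : e 0 = 0) : ∃ u : ℤˣ, ∀ x, e x = (u : ℤ) • x := by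
  have : NeZero (3 * k - 1) := ⟨by omega⟩
  have hstep : ∀ x, e (x + 3) - e x = 3 ∨ e x - e (x + 3) = 3 := fun x => by
    rw [← andrasfai_ncard_commonNeighbors_eq_iff hk, e.ncard_commonNeighbors,
      andrasfai_ncard_commonNeighbors_eq_iff hk, add_sub_cancel_left]
    exact Or.inl rfl
  have hcop : Nat.Coprime 3 (3 * k - 1) :=
    (Nat.Prime.coprime_iff_not_dvd Nat.prime_three).2 (by omega)
  have hrigid : ∀ f : ZMod (3 * k - 1) → ZMod (3 * k - 1), Injective f → f 0 = 0 → f 3 = 3 →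
      (∀ x, f (x + 3) - f x = 3 ∨ f x - f (x + 3) = 3) → ∀ x, f x = x := by
    intro f hf h0 h3 hs x
    obtain ⟨m, rfl⟩ := ZMod.exists_nsmul_natCast_eq hcop x
    simpa using hf.map_nsmul_eq_nsmul (ZMod.three_add_three_ne_zero hk) h0 h3 hs m
  rcases hstep 0 with h | h
  · rw [zero_add, he, sub_zero] at h
    exact ⟨1, by simpa using hrigid e e.injective he h hstep⟩
  · rw [zero_add, he, zero_sub] at h
    refine ⟨-1, fun x => ?_⟩
    have := hrigid (fun x => -e x) (neg_injective.comp e.injective) (by simp [he]) h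
      (fun x => by simpa only [neg_sub_neg, or_comm] using hstep x) x
    rw [← neg_neg (e x), this]
    simp

theorem andrasfai_exists_affineIso_eq (hk : 2 ≤ k) (σ : andrasfai k ≃g andrasfai k) :
    ∃ u b, andrasfaiAffineIso k u b = σ := by
  obtain ⟨u, hu⟩ := andrasfai_exists_units_of_map_zero hk
    (σ.trans (andrasfaiAffineIso k 1 (-σ 0))) (by simp [andrasfaiAffineIso_apply])
  refine ⟨u, σ 0, RelIso.ext fun x => ?_⟩
  have := hu x
  simp only [RelIso.trans_apply, andrasfaiAffineIso_apply] at this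
  rw [andrasfaiAffineIso_apply, ← this]
  simp

end Andrasfai

theorem andrasfai_card_aut (k : ℕ) (hk : 2 ≤ k) :
    Nat.card (andrasfai k ≃g andrasfai k) = 2 * (3 * k - 1) := by
  have : NeZero (3 * k - 1) := ⟨by omega⟩
  have hbij : Bijective fun p : ℤˣ × ZMod (3 * k - 1) => andrasfaiAffineIso k p.1 p.2 :=
    ⟨addCayleyGraph.affineIso_injective _ (ZMod.three_add_three_ne_zero hk), fun σ => by
      simpa using andrasfai_exists_affineIso_eq hk σ⟩
  calc Nat.card (andrasfai k ≃g andrasfai k) = Nat.card (ℤˣ × ZMod (3 * k - 1)) :=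
        (Nat.card_eq_of_bijective _ hbij).symm
    _ = 2 * (3 * k - 1) := by
      rw [Nat.card_prod, Nat.card_zmod, Nat.card_eq_fintype_card, Fintype.card_units_int]
end
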